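/- Let θ ∈ [arcsin(1/4), π - arcsin(1/4)], set r = (2·sinθ·√(5+sin²θ) - 2·sin²θ - 1)^{1/2} and t = (cosθ/sinθ)·(r²+1). Then the three points (1,0,0), (-1,0,0) and (r·cosθ, r·sinθ, t) of ℍ¹ form an equilateral set for the Korányi metric d_H, with all three pairwise distances equal to 2. -/

import Mathlib

/-! The point `q = (r cos θ, r sin θ, t)` lies at the same distance from `(1,0,0)` and `(-1,0,0)`:
for `a = ±1` the fourth power of `d_H((a,0,0), q)` is `(r²+1)²/sin²θ + 4r²`, the terms linear
in `a` cancelling. Setting this equal to `2⁴` gives a quadratic equation in `r²`, whose positive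
root is the value of `r²` in the statement; it is nonnegative exactly when `sin θ ≥ 1/4`. -/

open MeasureTheory Set ENNReal Real

noncomputable section

/-- The first Heisenberg group `ℍ¹`, identified with `ℝ³`. -/
abbrev H1 := ℝ × ℝ × ℝ

/-- The group law of `ℍ¹`:
`x·y = (x₁+y₁, x₂+y₂, x₃+y₃ - 2(x₁y₂ - x₂y₁))`. -/
def hmul1 (x y : H1) : H1 :=
  (x.1 + y.1, x.2.1 + y.2.1, x.2.2 + y.2.2 - 2 * (x.1 * y.2.1 - x.2.1 * y.1))

/-- The group inverse of `ℍ¹`, `x⁻¹ = -x`. -/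
def hinv1 (x : H1) : H1 := (-x.1, -x.2.1, -x.2.2)

/-- The Korányi norm `‖x‖_H = ((x₁²+x₂²)² + x₃²)^{1/4}`. -/
def KNorm1 (x : H1) : ℝ := ((x.1 ^ 2 + x.2.1 ^ 2) ^ 2 + x.2.2 ^ 2) ^ ((1 : ℝ) / 4)

/-- The Korányi metric `d_H(x,y) = ‖x⁻¹·y‖_H` on `ℍ¹`. -/
def dH1 (x y : H1) : ℝ := KNorm1 (hmul1 (hinv1 x) y)

/-- The closed `d_H`-ball of center `x` and radius `r`. -/
def ball1 (x : H1) (r : ℝ) : Set H1 := {y | dH1 x y ≤ r}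

lemma KNorm1_eq_of_pow_four (x : H1) {ρ : ℝ} (hρ : 0 ≤ ρ)
    (h : (x.1 ^ 2 + x.2.1 ^ 2) ^ 2 + x.2.2 ^ 2 = ρ ^ 4) : KNorm1 x = ρ := by
  rw [KNorm1, h, one_div, Real.rpow_inv_eq (by positivity) hρ four_ne_zero]
  norm_cast

lemma hmul1_hinv1_horizontal (a x y t : ℝ) :
    hmul1 (hinv1 (a, 0, 0)) (x, y, t) = (x - a, y, t + 2 * a * y) := by
  simp only [hmul1, hinv1, Prod.mk.injEq]
  exact ⟨by ring, by ring, by ring⟩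

lemma horizontal_unit_quartic_eq {a s c : ℝ} (ha : a ^ 2 = 1) (hs : s ≠ 0)
    (hsc : s ^ 2 + c ^ 2 = 1) (r : ℝ) :
    ((r * c - a) ^ 2 + (r * s) ^ 2) ^ 2 + (c / s * (r ^ 2 + 1) + 2 * a * (r * s)) ^ 2
      = (r ^ 2 + 1) ^ 2 / s ^ 2 + 4 * r ^ 2 := by
  have hA : (r * c - a) ^ 2 + (r * s) ^ 2 = r ^ 2 + 1 - 2 * a * r * c := by
    linear_combination r ^ 2 * hsc + ha
  have hB : (c / s * (r ^ 2 + 1) + 2 * a * (r * s)) ^ 2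
      = c ^ 2 / s ^ 2 * (r ^ 2 + 1) ^ 2 + 4 * a * r * c * (r ^ 2 + 1) + 4 * r ^ 2 * s ^ 2 := by
    field_simp
    linear_combination 4 * r ^ 2 * s ^ 4 * ha
  rw [hA, hB]
  field_simp
  linear_combination ((r ^ 2 + 1) ^ 2 + 4 * r ^ 2 * s ^ 2) * hsc + 4 * r ^ 2 * c ^ 2 * s ^ 2 * ha

lemma dH1_horizontal_unit_eq_two {a s c r : ℝ} (ha : a ^ 2 = 1) (hs : s ≠ 0)
    (hsc : s ^ 2 + c ^ 2 = 1) (hr : (r ^ 2 + 1) ^ 2 + 4 * r ^ 2 * s ^ 2 = 16 * s ^ 2) :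
    dH1 (a, 0, 0) (r * c, r * s, c / s * (r ^ 2 + 1)) = 2 := by
  rw [dH1, hmul1_hinv1_horizontal]
  refine KNorm1_eq_of_pow_four _ zero_le_two ?_
  rw [horizontal_unit_quartic_eq ha hs hsc]
  field_simp
  linear_combination hr

lemma two_mul_mul_sqrt_five_add_sq_sub_nonneg {s : ℝ} (hs : 1 / 4 ≤ s) :
    0 ≤ 2 * s * √(5 + s ^ 2) - 2 * s ^ 2 - 1 := by
  have hw : √(5 + s ^ 2) ^ 2 = 5 + s ^ 2 := Real.sq_sqrt (by positivity)
  have hsw : 0 ≤ 2 * s * √(5 + s ^ 2) := by positivity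
  -- `(2s√(5+s²))² - (2s² + 1)² = 16s² - 1 ≥ 0`
  nlinarith [sq_nonneg (2 * s * √(5 + s ^ 2) + 2 * s ^ 2 + 1)]

lemma quarter_le_sin {θ : ℝ} (h₁ : arcsin (1 / 4) ≤ θ) (h₂ : θ ≤ π - arcsin (1 / 4)) :
    1 / 4 ≤ sin θ := by
  have hq : (1 / 4 : ℝ) ∈ Icc (-1) 1 := by norm_num
  have hlow := (arcsin_mem_Icc (1 / 4 : ℝ)).1
  rcases le_or_gt θ (π / 2) with h | h
  · exact (arcsin_le_iff_le_sin hq ⟨by linarith, h⟩).1 h₁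
  · rw [← sin_pi_sub]
    exact (arcsin_le_iff_le_sin hq ⟨by linarith, by linarith⟩).1 (by linarith)

/-- For `θ ∈ [arcsin(1/4), π - arcsin(1/4)]`,
`r = (2 sinθ √(5+sin²θ) - 2 sin²θ - 1)^{1/2}` and `t = (cosθ/sinθ)(r²+1)`, the points
`(1,0,0)`, `(-1,0,0)` and `(r cosθ, r sinθ, t)` form an equilateral set for the Korányi
metric, with all pairwise distances equal to `2`. -/
theorem statement16 (θ : ℝ) (hθ₁ : Real.arcsin (1 / 4) ≤ θ)
    (hθ₂ : θ ≤ Real.pi - Real.arcsin (1 / 4)) (r t : ℝ)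
    (hr : r = Real.sqrt (2 * Real.sin θ * Real.sqrt (5 + Real.sin θ ^ 2)
      - 2 * Real.sin θ ^ 2 - 1))
    (ht : t = (Real.cos θ / Real.sin θ) * (r ^ 2 + 1)) :
    dH1 (1, 0, 0) (-1, 0, 0) = 2 ∧
    dH1 (1, 0, 0) (r * Real.cos θ, r * Real.sin θ, t) = 2 ∧
    dH1 (-1, 0, 0) (r * Real.cos θ, r * Real.sin θ, t) = 2 := by
  have hs : 1 / 4 ≤ sin θ := quarter_le_sin hθ₁ hθ₂
  have hr2 : r ^ 2 = 2 * sin θ * √(5 + sin θ ^ 2) - 2 * sin θ ^ 2 - 1 := by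
    rw [hr, Real.sq_sqrt (two_mul_mul_sqrt_five_add_sq_sub_nonneg hs)]
  have hquad : (r ^ 2 + 1) ^ 2 + 4 * r ^ 2 * sin θ ^ 2 = 16 * sin θ ^ 2 := by
    have hw : √(5 + sin θ ^ 2) ^ 2 = 5 + sin θ ^ 2 := Real.sq_sqrt (by positivity)
    rw [hr2]
    linear_combination 4 * sin θ ^ 2 * hw
  have hs0 : sin θ ≠ 0 := by linarith
  have hsc : sin θ ^ 2 + cos θ ^ 2 = 1 := sin_sq_add_cos_sq θ
  subst ht
  refine ⟨?_, dH1_horizontal_unit_eq_two (by norm_num) hs0 hsc hquad,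
    dH1_horizontal_unit_eq_two (by norm_num) hs0 hsc hquad⟩
  simp only [dH1, hmul1, hinv1]
  exact KNorm1_eq_of_pow_four _ zero_le_two (by norm_num)

end
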